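/- Let G be a finite simple graph. If λ(G) ≠ λ(Ḡ), then λ_g(G) = max{λ(G), λ(Ḡ)}. -/

import Mathlib

open SimpleGraph

/-- `S` is a dominating set of `G`: every vertex outside `S` has a neighbor in `S`. -/
def isDomSet {α : Type*} (G : SimpleGraph α) (S : Set α) : Prop :=
  ∀ v ∉ S, ∃ u ∈ S, G.Adj v u

/-- `S` is a locating-dominating set (LD-set) of `G`. -/
def isLDSet {α : Type*} (G : SimpleGraph α) (S : Set α) : Prop :=
  isDomSet G S ∧ ∀ u ∉ S, ∀ v ∉ S, u ≠ v →
    G.neighborSet u ∩ S ≠ G.neighborSet v ∩ S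

/-- The location-domination number `λ(G)`. -/
noncomputable def ldNum {α : Type*} (G : SimpleGraph α) : ℕ :=
  sInf {n | ∃ S : Set α, isLDSet G S ∧ S.ncard = n}

/-- The global location-domination number `λ_g(G)`. -/
noncomputable def gldNum {α : Type*} (G : SimpleGraph α) : ℕ :=
  sInf {n | ∃ S : Set α, isLDSet G S ∧ isLDSet Gᶜ S ∧ S.ncard = n}

/-- `G` is bipartite with stable sets `U` and `W`. -/
def bipartiteWith {α : Type*} (G : SimpleGraph α) (U W : Set α) : Prop :=
  U ∪ W = Set.univ ∧ Disjoint U W ∧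
    ∀ ⦃u v : α⦄, G.Adj u v → (u ∈ U ∧ v ∈ W) ∨ (u ∈ W ∧ v ∈ U)


/-!
Outside a set `S`, the trace on `S` of a neighbourhood in `Gᶜ` is the complement in `S` of the
trace in `G`, so every LD-set of `G` is locating in `Gᶜ`; it can fail to dominate `Gᶜ` only at the
unique vertex (if any) whose `G`-trace is all of `S`, and adding that vertex yields a global LD-set.
Hence `max λ(G) λ(Gᶜ) ≤ λ_g(G) ≤ min λ(G) λ(Gᶜ) + 1`, which pins `λ_g(G)` down to the maximum
as soon as `λ(G) ≠ λ(Gᶜ)`.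
-/

def IsLocating {α : Type*} (G : SimpleGraph α) (S : Set α) : Prop :=
  ∀ u ∉ S, ∀ v ∉ S, u ≠ v → G.neighborSet u ∩ S ≠ G.neighborSet v ∩ S

section

variable {V : Type*} {G : SimpleGraph V} {S T : Set V}

lemma isLDSet_univ (G : SimpleGraph V) : isLDSet G Set.univ :=
  ⟨fun v hv => (hv (Set.mem_univ v)).elim, fun u hu => (hu (Set.mem_univ u)).elim⟩

lemma isDomSet.mono (hS : isDomSet G S) (hST : S ⊆ T) : isDomSet G T := fun v hv =>
  let ⟨u, huS, hvu⟩ := hS v fun h => hv (hST h)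
  ⟨u, hST huS, hvu⟩

lemma IsLocating.mono (hS : IsLocating G S) (hST : S ⊆ T) : IsLocating G T := by
  intro u hu v hv huv htrace
  refine hS u (fun h => hu (hST h)) v (fun h => hv (hST h)) huv ?_
  rw [← Set.inter_eq_self_of_subset_right hST, ← Set.inter_assoc, ← Set.inter_assoc, htrace]

lemma isLDSet.isLocating (hS : isLDSet G S) : IsLocating G S := hS.2

lemma isLDSet.mono (hS : isLDSet G S) (hST : S ⊆ T) : isLDSet G T :=
  ⟨hS.1.mono hST, hS.isLocating.mono hST⟩

lemma compl_neighborSet_inter {u : V} (hu : u ∉ S) :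
    Gᶜ.neighborSet u ∩ S = S \ G.neighborSet u := by
  ext w
  simp only [Set.mem_inter_iff, Set.mem_sdiff, mem_neighborSet, compl_adj]
  exact ⟨fun ⟨⟨_, hnadj⟩, hw⟩ => ⟨hw, hnadj⟩,
    fun ⟨hw, hnadj⟩ => ⟨⟨fun h => hu (h ▸ hw), hnadj⟩, hw⟩⟩

lemma compl_neighborSet_inter_eq_iff {u v : V} (hu : u ∉ S) (hv : v ∉ S) :
    Gᶜ.neighborSet u ∩ S = Gᶜ.neighborSet v ∩ S ↔ G.neighborSet u ∩ S = G.neighborSet v ∩ S := by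
  rw [compl_neighborSet_inter hu, compl_neighborSet_inter hv, sdiff_eq_sdiff_iff_inf_eq_inf,
    inf_comm, inf_comm S]
  rfl

lemma IsLocating.compl (hS : IsLocating G S) : IsLocating Gᶜ S := fun u hu v hv huv htrace =>
  hS u hu v hv huv ((compl_neighborSet_inter_eq_iff hu hv).1 htrace)

/-- Two vertices outside `S` with no `Gᶜ`-neighbour in `S` would have the same trace `S` in `G`. -/
lemma IsLocating.isDomSet_compl_insert (hS : IsLocating G S) {u : V} (hu : u ∉ S)
    (hu_undominated : ∀ w ∈ S, ¬ Gᶜ.Adj u w) : isDomSet Gᶜ (insert u S) := by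
  intro v hv
  rw [Set.mem_insert_iff, not_or] at hv
  obtain ⟨hvu, hvS⟩ := hv
  by_contra hv_undominated
  refine hS.compl v hvS u hu hvu (Set.ext fun w => ?_)
  exact ⟨fun ⟨hvw, hw⟩ => (hv_undominated ⟨w, Set.mem_insert_of_mem u hw, hvw⟩).elim,
    fun ⟨huw, hw⟩ => (hu_undominated w hw huw).elim⟩

lemma isLDSet.exists_global_ncard_le_succ (hS : isLDSet G S) :
    ∃ T, isLDSet G T ∧ isLDSet Gᶜ T ∧ T.ncard ≤ S.ncard + 1 := by
  by_cases hdom : isDomSet Gᶜ S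
  · exact ⟨S, hS, ⟨hdom, hS.isLocating.compl⟩, S.ncard.le_succ⟩
  obtain ⟨u, hu, hu_undominated⟩ : ∃ u ∉ S, ∀ w ∈ S, ¬ Gᶜ.Adj u w := by
    simpa [isDomSet] using hdom
  have hsub := Set.subset_insert u S
  exact ⟨insert u S, hS.mono hsub,
    ⟨hS.isLocating.isDomSet_compl_insert hu hu_undominated, hS.isLocating.compl.mono hsub⟩,
    Set.ncard_insert_le u S⟩

lemma ldNum_le_ncard (hS : isLDSet G S) : ldNum G ≤ S.ncard :=
  Nat.sInf_le ⟨S, hS, rfl⟩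

lemma gldNum_le_ncard (hG : isLDSet G S) (hGc : isLDSet Gᶜ S) : gldNum G ≤ S.ncard :=
  Nat.sInf_le ⟨S, hG, hGc, rfl⟩

variable (G)

lemma exists_isLDSet_ncard_eq_ldNum : ∃ S, isLDSet G S ∧ S.ncard = ldNum G :=
  Nat.sInf_mem (s := {n | ∃ S, isLDSet G S ∧ S.ncard = n}) ⟨_, Set.univ, isLDSet_univ G, rfl⟩

lemma exists_global_ncard_eq_gldNum : ∃ S, isLDSet G S ∧ isLDSet Gᶜ S ∧ S.ncard = gldNum G :=
  Nat.sInf_mem (s := {n | ∃ S, isLDSet G S ∧ isLDSet Gᶜ S ∧ S.ncard = n})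
    ⟨_, Set.univ, isLDSet_univ G, isLDSet_univ Gᶜ, rfl⟩

lemma ldNum_le_gldNum : ldNum G ≤ gldNum G := by
  obtain ⟨S, hG, -, hcard⟩ := exists_global_ncard_eq_gldNum G
  exact hcard ▸ ldNum_le_ncard hG

lemma gldNum_le_ldNum_add_one : gldNum G ≤ ldNum G + 1 := by
  obtain ⟨S, hS, hcard⟩ := exists_isLDSet_ncard_eq_ldNum G
  obtain ⟨T, hG, hGc, hT⟩ := hS.exists_global_ncard_le_succ
  exact hcard ▸ (gldNum_le_ncard hG hGc).trans hT

lemma gldNum_compl : gldNum Gᶜ = gldNum G := by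
  simp only [gldNum, compl_compl, and_left_comm]

end

theorem stmt6_general {V : Type*} (G : SimpleGraph V)
    (h : ldNum G ≠ ldNum Gᶜ) :
    gldNum G = max (ldNum G) (ldNum Gᶜ) := by
  have hG_le := ldNum_le_gldNum G
  have hGc_le := gldNum_compl G ▸ ldNum_le_gldNum Gᶜ
  have hG_ge := gldNum_le_ldNum_add_one G
  have hGc_ge := gldNum_compl G ▸ gldNum_le_ldNum_add_one Gᶜ
  omega

theorem stmt6 {V : Type*} [Fintype V] (G : SimpleGraph V)
    (h : ldNum G ≠ ldNum Gᶜ) :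
    gldNum G = max (ldNum G) (ldNum Gᶜ) :=
  stmt6_general G h
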